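/- Let G be a group, A = ℤ[G]/⟨1, g+g⁻¹⟩, and fix g, h ∈ G with [g,h] ≠ 1 (g and h do not commute). Define u : G → A on h by u(h) = [g] − [hgh⁻¹]. If G is a free group on {g, h} (so there are no relations beyond group axioms), then u(h) ≠ 0 in A. -/

import Mathlib

/-- The generating set `{1} ∪ {g + g⁻¹ : g ∈ G}` inside the group ring `ℤ[G]`. -/
def relSet (G : Type) [Group G] : Set (MonoidAlgebra ℤ G) :=
  {x | x = MonoidAlgebra.single (1 : G) (1 : ℤ) ∨
    ∃ g : G, x = MonoidAlgebra.single g (1 : ℤ) + MonoidAlgebra.single g⁻¹ (1 : ℤ)}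

/-- The subgroup `⟨1, g + g⁻¹⟩` of the additive group of `ℤ[G]`. -/
noncomputable def relSub (G : Type) [Group G] : AddSubgroup (MonoidAlgebra ℤ G) :=
  AddSubgroup.closure (relSet G)

/-- The abelian group `A = ℤ[G] / ⟨1, g + g⁻¹⟩`. -/
abbrev AA (G : Type) [Group G] := MonoidAlgebra ℤ G ⧸ relSub G

/-- Conjugation by `g` on `ℤ[G]`, extended ℤ-linearly from `h ↦ g h g⁻¹`. -/
noncomputable def conjHom (G : Type) [Group G] (g : G) : MonoidAlgebra ℤ G →+ MonoidAlgebra ℤ G :=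
  (MonoidAlgebra.mapDomainLinearMap ℤ ℤ (fun h => g * h * g⁻¹)).toAddMonoidHom

/-- The involution on `ℤ[G]`, extended ℤ-linearly from `g ↦ g⁻¹`. -/
noncomputable def invHom (G : Type) [Group G] : MonoidAlgebra ℤ G →+ MonoidAlgebra ℤ G :=
  (MonoidAlgebra.mapDomainLinearMap ℤ ℤ (fun g : G => g⁻¹)).toAddMonoidHom

/-!
The functional `x ↦ x(a) - x(a⁻¹)` on `ℤ[G]` kills `1` and every `k + k⁻¹`, so it descends to `A`.
It takes the value `1` on `[a]` as soon as `a ≠ a⁻¹`, and `0` on `[b]` for `b ∉ {a, a⁻¹}`.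
In the free group, `a = g` and `b = hgh⁻¹` qualify.
-/

open MonoidAlgebra

section

variable {G : Type} [Group G]

noncomputable def antisymmCoeff (a : G) : MonoidAlgebra ℤ G →+ ℤ :=
  (Finsupp.applyAddHom a - Finsupp.applyAddHom a⁻¹ : (G →₀ ℤ) →+ ℤ).comp
    coeffAddEquiv.toAddMonoidHom

lemma antisymmCoeff_apply (a : G) (x : MonoidAlgebra ℤ G) :
    antisymmCoeff a x = x.coeff a - x.coeff a⁻¹ :=
  rfl

lemma relSub_le_ker_antisymmCoeff (a : G) : relSub G ≤ (antisymmCoeff a).ker := by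
  classical
  rw [relSub, AddSubgroup.closure_le]
  rintro x (rfl | ⟨k, rfl⟩) <;>
    simp only [SetLike.mem_coe, AddMonoidHom.mem_ker, antisymmCoeff_apply, coeff_add,
      coeff_single, Finsupp.add_apply, Finsupp.single_apply]
  · rw [one_eq_inv, eq_comm (a := a), sub_self]
  · rw [inv_inj, inv_eq_iff_eq_inv]
    abel

theorem mk_single_ne_mk_single {a b : G} (ha : a ≠ a⁻¹) (hba : b ≠ a) (hba' : b ≠ a⁻¹) :
    (QuotientAddGroup.mk (single a 1) : AA G) ≠ QuotientAddGroup.mk (single b 1) := by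
  intro h
  have hval := congrArg (QuotientAddGroup.lift _ _ (relSub_le_ker_antisymmCoeff a)) h
  simp [antisymmCoeff_apply, ha, hba, hba'] at hval

end

/-- for `G` the free group on two generators `g, h` (which do not
commute), the element `u(h) = [g] - [hgh⁻¹]` is nonzero in `A = ℤ[G]/⟨1, g+g⁻¹⟩`. -/
theorem stmt_17 :
    (QuotientAddGroup.mk
        (MonoidAlgebra.single (FreeGroup.of true) (1 : ℤ)) : AA (FreeGroup Bool)) -
      QuotientAddGroup.mk
        (MonoidAlgebra.single
          (FreeGroup.of false * FreeGroup.of true * (FreeGroup.of false)⁻¹) (1 : ℤ))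
      ≠ 0 :=
  sub_ne_zero.mpr (mk_single_ne_mk_single (by decide) (by decide) (by decide))
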